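/- arXiv:1502.05825 — 4 statements merged into one kernel-verified Lean document; each statement's English description precedes it below -/
import Mathlib

section
/- Let π be a permutation of {0,1}^n (functions Fin n → Bool) with π ∘ π = id and π ≠ id. Then the support of π has cardinality 2^k for some k with 1 ≤ k ≤ n if and only if there exist an MPMCT gate permutation g on n lines and a permutation σ of {0,1}^n such that π = σ ∘ g ∘ σ^{-1}. (This characterizes precisely the self-inverse functions realizable by an odd palindromic reversible circuit on n lines.) -/
/-- `IsMPMCT g` states that `g` is the permutation of `{0,1}^n` realized by a
mixed-polarity multiple-controlled Toffoli gate: for some target line `t`, control set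
`C` with `t ∉ C` and polarities `p`, the permutation `g` flips bit `t` of `x` exactly
when `x j = p j` for all `j ∈ C`. -/
def IsMPMCT {n : ℕ} (g : Equiv.Perm (Fin n → Bool)) : Prop :=
  ∃ (t : Fin n) (C : Finset (Fin n)) (p : Fin n → Bool), t ∉ C ∧
    ∀ x, g x = if ∀ j ∈ C, x j = p j then Function.update x t (!(x t)) else x

section Aux

variable {n : ℕ}

/-- Bijection between the assignments satisfying the control condition and the
assignments on the complement of `C`. -/
def condEquiv (C : Finset (Fin n)) (p : Fin n → Bool) :
    {x : Fin n → Bool // ∀ j ∈ C, x j = p j} ≃ ({j : Fin n // j ∉ C} → Bool) where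
  toFun x j := x.1 j.1
  invFun y := ⟨fun j => if h : j ∈ C then p j else y ⟨j, h⟩, fun j hj => by simp [hj]⟩
  left_inv x := by
    ext j
    dsimp only
    split
    · exact (x.2 j ‹_›).symm
    · rfl
  right_inv y := by
    ext j
    simp [j.2]

lemma card_cond (C : Finset (Fin n)) (p : Fin n → Bool) :
    (Finset.univ.filter (fun x : Fin n → Bool => ∀ j ∈ C, x j = p j)).card
      = 2 ^ (n - C.card) := by
  rw [← Fintype.card_subtype, Fintype.card_congr (condEquiv C p), Fintype.card_fun,
    Fintype.card_bool, Fintype.card_subtype_compl, Fintype.card_coe, Fintype.card_fin]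

lemma mpmct_support {g : Equiv.Perm (Fin n → Bool)} {t : Fin n} {C : Finset (Fin n)}
    {p : Fin n → Bool}
    (hg : ∀ x, g x = if ∀ j ∈ C, x j = p j then Function.update x t (!(x t)) else x) :
    g.support = Finset.univ.filter (fun x => ∀ j ∈ C, x j = p j) := by
  ext x
  simp only [Equiv.Perm.mem_support, hg, Finset.mem_filter, Finset.mem_univ, true_and]
  split
  · constructor
    · intro _; assumption
    · intro _ h
      have := congr_fun h t
      simp at this
  · exact iff_of_false (by simp) ‹¬∀ j ∈ C, x j = p j›

lemma invol_cycleType {α : Type*} [Fintype α] [DecidableEq α] (π : Equiv.Perm α)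
    (h : π * π = 1) : π.cycleType = Multiset.replicate π.cycleType.card 2 := by
  rw [Multiset.eq_replicate_card]
  intro a ha
  have h2 : 2 ≤ a := Equiv.Perm.two_le_of_mem_cycleType ha
  have hdvd : a ∣ orderOf π := by
    rw [← Equiv.Perm.lcm_cycleType]; exact Multiset.dvd_lcm ha
  have ho : orderOf π ∣ 2 := orderOf_dvd_of_pow_eq_one (by rw [pow_two]; exact h)
  have : a ∣ 2 := hdvd.trans ho
  exact le_antisymm (Nat.le_of_dvd two_pos this) h2

end Aux

/-- A nonidentity involution `π` of `{0,1}^n` has support of cardinality `2^k` for some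
`1 ≤ k ≤ n` if and only if `π` is a conjugate `σ * g * σ⁻¹` of some MPMCT gate
permutation `g` — i.e. precisely the self-inverse functions realizable by an odd
palindromic reversible circuit on `n` lines. -/
theorem involution_power_of_two_support_iff_conjugate_mpmct {n : ℕ}
    (π : Equiv.Perm (Fin n → Bool)) (h1 : π * π = 1) (h2 : π ≠ 1) :
    (∃ k, 1 ≤ k ∧ k ≤ n ∧ π.support.card = 2 ^ k) ↔
      ∃ (g σ : Equiv.Perm (Fin n → Bool)), IsMPMCT g ∧ π = σ * g * σ⁻¹ := by
  constructor
  · rintro ⟨k, hk1, hkn, hcard⟩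
    -- choose a target t and control set C of size n - k avoiding t
    have hn : 1 ≤ n := hk1.trans hkn
    set t : Fin n := ⟨0, hn⟩ with ht
    obtain ⟨C, hCsub, hCcard⟩ :
        ∃ C ⊆ (Finset.univ.erase t), C.card = n - k := by
      apply Finset.exists_subset_card_eq
      rw [Finset.card_erase_of_mem (Finset.mem_univ t), Finset.card_univ, Fintype.card_fin]
      omega
    have htC : t ∉ C := fun h => (Finset.mem_erase.mp (hCsub h)).1 rfl
    set p : Fin n → Bool := fun _ => true with hp
    -- the gate as an involution
    have hinv : Function.Involutive (fun x : Fin n → Bool =>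
        if ∀ j ∈ C, x j = p j then Function.update x t (!(x t)) else x) := by
      intro x
      dsimp only
      by_cases hc : ∀ j ∈ C, x j = p j
      · rw [if_pos hc]
        have hc2 : ∀ j ∈ C, Function.update x t (!(x t)) j = p j := by
          intro j hj
          rw [Function.update_of_ne (by rintro rfl; exact htC hj)]
          exact hc j hj
        rw [if_pos hc2]
        simp
      · rw [if_neg hc, if_neg hc]
    set g : Equiv.Perm (Fin n → Bool) := hinv.toPerm _ with hgdef
    have hgfun : ∀ x, g x =
        if ∀ j ∈ C, x j = p j then Function.update x t (!(x t)) else x := fun _ => rfl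
    have hgg : g * g = 1 := by
      ext x
      simp [hgfun, hinv x]
    have hgsupp : g.support.card = 2 ^ k := by
      rw [mpmct_support hgfun, card_cond, hCcard]
      congr 1
      omega
    have hconj : IsConj g π := by
      rw [Equiv.Perm.isConj_iff_cycleType_eq, invol_cycleType g hgg, invol_cycleType π h1]
      have hs1 := Equiv.Perm.sum_cycleType g
      have hs2 := Equiv.Perm.sum_cycleType π
      rw [invol_cycleType g hgg] at hs1
      rw [invol_cycleType π h1] at hs2
      simp only [Multiset.sum_replicate, smul_eq_mul] at hs1 hs2
      congr 1
      omega
    obtain ⟨σ, hσ⟩ := isConj_iff.mp hconj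
    exact ⟨g, σ, ⟨t, C, p, htC, hgfun⟩, hσ.symm⟩
  · rintro ⟨g, σ, ⟨t, C, p, htC, hgfun⟩, rfl⟩
    refine ⟨n - C.card, ?_, Nat.sub_le _ _, ?_⟩
    · have : C.card < n := by
        have hsub : C ⊆ Finset.univ.erase t := fun j hj =>
          Finset.mem_erase.mpr ⟨by rintro rfl; exact htC hj, Finset.mem_univ j⟩
        have := Finset.card_le_card hsub
        rw [Finset.card_erase_of_mem (Finset.mem_univ t), Finset.card_univ,
          Fintype.card_fin] at this
        have hn : 1 ≤ n := t.pos
        omega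
      omega
    · rw [Equiv.Perm.card_support_conj, mpmct_support hgfun, card_cond]
end

section
/- Let a, b ∈ {0,1}^n (functions Fin n → Bool) differ in exactly one coordinate i (a_i ≠ b_i and a_j = b_j for all j ≠ i). Then the transposition swapping a and b (Equiv.swap a b) equals the MPMCT gate permutation with target line i, control set C = {j : j ≠ i}, and polarities p_j = a_j for j ∈ C; i.e., every transposition of two vectors at Hamming distance 1 is a fully controlled MPMCT gate. -/
/-- If `a` and `b` differ in exactly the coordinate `i`, then the transposition swapping
`a` and `b` equals the fully controlled MPMCT gate permutation with target line `i`,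
control set `C = {j : j ≠ i}` and polarities `p j = a j`: it flips bit `i` of `x`
exactly when `x j = a j` for all `j ≠ i`, and fixes `x` otherwise. -/
theorem swap_eq_fully_controlled_mpmct {n : ℕ} (a b : Fin n → Bool) (i : Fin n)
    (hi : a i ≠ b i) (hj : ∀ j, j ≠ i → a j = b j) :
    ∀ x, Equiv.swap a b x =
      if ∀ j, j ≠ i → x j = a j then Function.update x i (!(x i)) else x := by
  intro x
  have hb : b i = !(a i) := by
    cases h1 : a i <;> cases h2 : b i <;> simp_all
  by_cases hxa : x = a
  · subst hxa
    rw [Equiv.swap_apply_left, if_pos (fun j _ => rfl)]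
    funext j
    by_cases hji : j = i
    · subst hji; simp [Function.update_self, hb]
    · rw [Function.update_of_ne hji, hj j hji]
  · by_cases hxb : x = b
    · subst hxb
      rw [Equiv.swap_apply_right, if_pos (fun j hji => (hj j hji).symm)]
      funext j
      by_cases hji : j = i
      · subst hji; simp [Function.update_self, hb]
      · rw [Function.update_of_ne hji, hj j hji]
    · rw [Equiv.swap_apply_of_ne_of_ne hxa hxb, if_neg]
      intro h
      by_cases hxi : x i = a i
      · apply hxa; funext j
        by_cases hji : j = i
        · subst hji; exact hxi
        · exact h j hji
      · apply hxb; funext j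
        by_cases hji : j = i
        · subst hji; cases h1 : a j <;> cases h2 : x j <;> simp_all
        · rw [h j hji, hj j hji]
end

section
/- For n ≥ 1, the number of distinct permutations of {0,1}^n (functions Fin n → Bool) that are realized by a single-target gate equals n · (2^{2^{n−1}} − 1) + 1. That is, the set of permutations of the form x ↦ (x with bit t flipped if g(x) = true, else x), ranging over all target lines t ∈ Fin n and all Boolean control functions g : {0,1}^n → Bool that do not depend on coordinate t, has cardinality n(2^{2^{n−1}} − 1) + 1. -/
section Aux

variable {n : ℕ}

/-- the raw gate function -/
private def stgFun (t : Fin n) (g : (Fin n → Bool) → Bool) : (Fin n → Bool) → (Fin n → Bool) :=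
  fun x => if g x then Function.update x t (!(x t)) else x

private lemma stg_update_ne (t : Fin n) (x : Fin n → Bool) :
    Function.update x t (!(x t)) ≠ x := by
  intro h
  have := congrFun h t
  simp at this

private lemma stgFun_involutive (t : Fin n) (g : (Fin n → Bool) → Bool)
    (hind : ∀ x y : Fin n → Bool, (∀ j, j ≠ t → x j = y j) → g x = g y) :
    Function.Involutive (stgFun t g) := by
  intro x
  unfold stgFun
  by_cases hg : g x
  · have h1 : g (Function.update x t (!(x t))) = g x := by
      apply hind
      intro j hj
      simp [Function.update_of_ne hj]
    rw [if_pos hg, h1, if_pos hg]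
    funext j
    by_cases hj : j = t
    · subst hj; simp
    · simp [Function.update_of_ne hj]
  · rw [if_neg hg, if_neg hg]

/-- the control functions giving a non-identity gate on target `t` -/
private def Ctrl (n : ℕ) (t : Fin n) :=
  {g : (Fin n → Bool) → Bool //
    (∀ x y : Fin n → Bool, (∀ j, j ≠ t → x j = y j) → g x = g y) ∧ ∃ x, g x = true}

private instance (t : Fin n) : Finite (Ctrl n t) := by
  unfold Ctrl; infer_instance

private def stgPerm (t : Fin n) (g : Ctrl n t) : Equiv.Perm (Fin n → Bool) :=
  Function.Involutive.toPerm _ (stgFun_involutive t g.1 g.2.1)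

@[simp] private lemma stgPerm_apply (t : Fin n) (g : Ctrl n t) (x : Fin n → Bool) :
    stgPerm t g x = if g.1 x then Function.update x t (!(x t)) else x := rfl

private def extFun (t : Fin n) (y : {j : Fin n // j ≠ t} → Bool) : Fin n → Bool :=
  fun j => if h : j = t then false else y ⟨j, h⟩

private def resFun (t : Fin n) (x : Fin n → Bool) : {j : Fin n // j ≠ t} → Bool :=
  fun j => x j.1

private lemma res_ext (t : Fin n) (y : {j : Fin n // j ≠ t} → Bool) :
    resFun t (extFun t y) = y := by
  funext j
  simp [resFun, extFun, j.2]

/-- `Ctrl n t` is equivalent to nonzero Boolean functions on the other lines. -/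
private def ctrlEquiv (t : Fin n) :
    Ctrl n t ≃ {G : ({j : Fin n // j ≠ t} → Bool) → Bool // G ≠ fun _ => false} where
  toFun g := ⟨fun y => g.1 (extFun t y), by
    intro hG
    obtain ⟨x, hx⟩ := g.2.2
    have h1 : g.1 (extFun t (resFun t x)) = g.1 x := by
      apply g.2.1
      intro j hj
      simp [extFun, resFun, hj]
    have h2 := congrFun hG (resFun t x)
    rw [h1, hx] at h2
    simp at h2⟩
  invFun G := ⟨fun x => G.1 (resFun t x), by
    constructor
    · intro x y h
      have hres : resFun t x = resFun t y := funext fun j => h j.1 j.2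
      show G.1 (resFun t x) = G.1 (resFun t y)
      rw [hres]
    · by_contra hc
      push_neg at hc
      apply G.2
      funext y
      have := hc (extFun t y)
      rw [res_ext] at this
      simpa using this⟩
  left_inv g := by
    apply Subtype.ext
    funext x
    apply g.2.1
    intro j hj
    simp [extFun, resFun, hj]
  right_inv G := by
    apply Subtype.ext
    funext y
    simp [res_ext]

private lemma card_ctrl (hn : 1 ≤ n) (t : Fin n) :
    Nat.card (Ctrl n t) = 2 ^ 2 ^ (n - 1) - 1 := by
  classical
  rw [Nat.card_congr (ctrlEquiv t), Nat.card_eq_fintype_card]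
  have hother : Fintype.card {j : Fin n // j ≠ t} = n - 1 := by
    have h1 : Fintype.card {j : Fin n // j ≠ t} = Fintype.card {j : Fin n // ¬ (j = t)} :=
      Fintype.card_congr (Equiv.subtypeEquivRight (fun _ => Iff.rfl))
    rw [h1, Fintype.card_subtype_compl, Fintype.card_subtype_eq, Fintype.card_fin]
  have hfun : Fintype.card (({j : Fin n // j ≠ t} → Bool) → Bool) = 2 ^ 2 ^ (n - 1) := by
    rw [Fintype.card_fun, Fintype.card_fun, hother, Fintype.card_bool]
  have h2 : Fintype.card {G : ({j : Fin n // j ≠ t} → Bool) → Bool // G ≠ fun _ => false}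
      = Fintype.card {G : ({j : Fin n // j ≠ t} → Bool) → Bool // ¬ (G = fun _ => false)} :=
    Fintype.card_congr (Equiv.subtypeEquivRight (fun _ => Iff.rfl))
  rw [h2, Fintype.card_subtype_compl, Fintype.card_subtype_eq, hfun]

end Aux

/-- For `n ≥ 1`, the number of distinct permutations of `{0,1}^n` realized by a single
single-target gate — i.e. permutations of the form
`x ↦ (x with bit t flipped if g x = true, else x)` for some target line `t` and some
Boolean control function `g` not depending on coordinate `t` — equals
`n * (2 ^ 2 ^ (n - 1) - 1) + 1`. -/
theorem count_single_target_gate_permutations (n : ℕ) (hn : 1 ≤ n) :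
    Nat.card {π : Equiv.Perm (Fin n → Bool) //
        ∃ (t : Fin n) (g : (Fin n → Bool) → Bool),
          (∀ x y : Fin n → Bool, (∀ j, j ≠ t → x j = y j) → g x = g y) ∧
          ∀ x, π x = if g x then Function.update x t (!(x t)) else x} =
      n * (2 ^ 2 ^ (n - 1) - 1) + 1 := by
  classical
  haveI : ∀ t : Fin n, Fintype (Ctrl n t) := fun t => Fintype.ofFinite _
  set P : Equiv.Perm (Fin n → Bool) → Prop := fun π =>
    ∃ (t : Fin n) (g : (Fin n → Bool) → Bool),
      (∀ x y : Fin n → Bool, (∀ j, j ≠ t → x j = y j) → g x = g y) ∧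
      ∀ x, π x = if g x then Function.update x t (!(x t)) else x with hPdef
  have t0 : Fin n := ⟨0, hn⟩
  -- the map from Option (Σ t, Ctrl n t)
  let F : Option (Σ t : Fin n, Ctrl n t) → {π : Equiv.Perm (Fin n → Bool) // P π} :=
    fun o => match o with
      | none => ⟨1, t0, fun _ => false, fun _ _ _ => rfl, fun x => by simp⟩
      | some ⟨t, g⟩ => ⟨stgPerm t g, t, g.1, g.2.1, fun x => rfl⟩
  have hFinj : Function.Injective F := by
    rintro (_ | ⟨t, g⟩) (_ | ⟨t', g'⟩) h
    · rfl
    · -- 1 = stgPerm t' g' : contradiction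
      exfalso
      obtain ⟨x, hx⟩ := g'.2.2
      have := congrArg (fun p => p.1 x) h
      simp only [F] at this
      rw [Equiv.Perm.one_apply, stgPerm_apply, hx, if_pos rfl] at this
      exact stg_update_ne t' x this.symm
    · exfalso
      obtain ⟨x, hx⟩ := g.2.2
      have := congrArg (fun p => p.1 x) h
      simp only [F] at this
      rw [Equiv.Perm.one_apply, stgPerm_apply, hx, if_pos rfl] at this
      exact stg_update_ne t x this
    · have hperm : stgPerm t g = stgPerm t' g' := congrArg Subtype.val h
      -- first t = t'
      obtain ⟨x, hx⟩ := g.2.2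
      have hval := Equiv.ext_iff.mp hperm x
      have htt : t = t' := by
        by_contra htt
        rw [stgPerm_apply, stgPerm_apply, hx, if_pos rfl] at hval
        have hxt : Function.update x t (!(x t)) t = !(x t) := by simp
        by_cases hg' : g'.1 x = true
        · rw [if_pos hg'] at hval
          have := congrFun hval t
          rw [hxt, Function.update_of_ne htt] at this
          simp at this
        · rw [if_neg hg'] at hval
          have := congrFun hval t
          rw [hxt] at this
          simp at this
      subst htt
      -- then g = g'
      have hgg : g = g' := by
        apply Subtype.ext
        funext y
        have hy := Equiv.ext_iff.mp hperm y
        rw [stgPerm_apply, stgPerm_apply] at hy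
        by_cases h1 : g.1 y = true <;> by_cases h2 : g'.1 y = true
        · rw [h1, h2]
        · rw [if_pos h1, if_neg h2] at hy
          exact absurd hy (stg_update_ne t y)
        · rw [if_neg h1, if_pos h2] at hy
          exact absurd hy.symm (stg_update_ne t y)
        · rw [Bool.eq_false_iff.mpr h1, Bool.eq_false_iff.mpr h2]
      rw [hgg]
  have hFsurj : Function.Surjective F := by
    rintro ⟨π, t, g, hind, hπ⟩
    by_cases hex : ∃ x, g x = true
    · refine ⟨some ⟨t, g, hind, hex⟩, ?_⟩
      apply Subtype.ext
      apply Equiv.ext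
      intro x
      simp only [F, stgPerm_apply]
      exact (hπ x).symm
    · refine ⟨none, ?_⟩
      apply Subtype.ext
      apply Equiv.ext
      intro x
      simp only [F]
      rw [Equiv.Perm.one_apply, hπ x, if_neg (by
        intro hc
        exact hex ⟨x, hc⟩)]
  have hcard := Nat.card_congr (Equiv.ofBijective F ⟨hFinj, hFsurj⟩)
  rw [← hcard, Finite.card_option, Nat.card_eq_fintype_card, Fintype.card_sigma]
  have : ∀ t : Fin n, Fintype.card (Ctrl n t) = 2 ^ 2 ^ (n - 1) - 1 := by
    intro t
    rw [← Nat.card_eq_fintype_card, card_ctrl hn t]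
  simp only [this, Finset.sum_const, Finset.card_univ, Fintype.card_fin, smul_eq_mul]
end

section
/- Fix n ≥ 1, a coordinate i ∈ Fin n, and let π be a permutation of {0,1}^n with π ≠ id such that for every non-fixed x, π(x) equals x with bit i flipped (so π is an involution all of whose transpositions lie in H_{n,i}). Let S be the support of π and let k be such that |S| = 2^k; let D = {j ∈ Fin n : there exist x, y ∈ S with x_j ≠ y_j} be the set of coordinates on which the support elements differ. Then π is an MPMCT gate permutation with target line i if and only if |S| is a power of 2 and |D| = k. -/
open Finset

lemma card_subcube {n : ℕ} (D : Finset (Fin n)) (c : Fin n → Bool) :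
    (Finset.univ.filter fun x : Fin n → Bool => ∀ j ∉ D, x j = c j).card = 2 ^ D.card := by
  rw [← Fintype.card_subtype]
  have e : {x : Fin n → Bool // ∀ j ∉ D, x j = c j} ≃ (↥D → Bool) :=
    { toFun := fun x j => x.1 j
      invFun := fun f => ⟨fun j => if h : j ∈ D then f ⟨j, h⟩ else c j, fun j hj => dif_neg hj⟩
      left_inv := by
        rintro ⟨x, hx⟩
        ext j
        by_cases h : j ∈ D
        · simp [h]
        · simp [h, hx j h]
      right_inv := by
        intro f
        ext j
        simp }
  rw [Fintype.card_congr e, Fintype.card_fun, Fintype.card_coe, Fintype.card_bool]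

/-- Let `π ≠ id` be a permutation of `{0,1}^n` all of whose non-fixed points are moved
by flipping bit `i` (so `π` is an involution whose transpositions all lie in `H_{n,i}`).
Let `D` be the set of coordinates on which elements of the support of `π` differ.  Then
`π` is an MPMCT gate permutation with target line `i` (for some control set `C` with
`i ∉ C` and polarities `p`) if and only if the cardinality of the support of `π` is a
power `2 ^ k` of two and `|D| = k`. -/
theorem mpmct_on_line_iff_support_subcube (n : ℕ) (i : Fin n)
    (π : Equiv.Perm (Fin n → Bool)) (hne : π ≠ 1)
    (hπ : ∀ x, π x ≠ x → π x = Function.update x i (!(x i))) :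
    (∃ (C : Finset (Fin n)) (p : Fin n → Bool), i ∉ C ∧
        ∀ x, π x = if ∀ j ∈ C, x j = p j then Function.update x i (!(x i)) else x) ↔
      ∃ k, π.support.card = 2 ^ k ∧
        (Finset.univ.filter fun j =>
          ∃ x ∈ π.support, ∃ y ∈ π.support, x j ≠ y j).card = k := by
  constructor
  · rintro ⟨C, p, hiC, hgate⟩
    have hsupp : π.support = Finset.univ.filter fun x => ∀ j ∈ C, x j = p j := by
      ext x
      simp only [Equiv.Perm.mem_support, Finset.mem_filter, Finset.mem_univ, true_and]
      constructor
      · intro hx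
        by_contra h
        push_neg at h
        obtain ⟨j, hj, hjx⟩ := h
        exact hx (by rw [hgate x, if_neg (by push_neg; exact ⟨j, hj, hjx⟩)])
      · intro h
        rw [hgate x, if_pos h]
        intro heq
        have := congrFun heq i
        simp at this
    have hD : (Finset.univ.filter fun j => ∃ x ∈ π.support, ∃ y ∈ π.support, x j ≠ y j) = Cᶜ := by
      ext j
      simp only [Finset.mem_filter, Finset.mem_univ, true_and, Finset.mem_compl]
      constructor
      · rintro ⟨x, hx, y, hy, hxy⟩ hjC
        rw [hsupp] at hx hy
        simp only [Finset.mem_filter, Finset.mem_univ, true_and] at hx hy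
        exact hxy ((hx j hjC).trans (hy j hjC).symm)
      · intro hjC
        set b : Fin n → Bool := fun l => if l ∈ C then p l else true with hb
        have hbS : b ∈ π.support := by
          rw [hsupp]; simp only [mem_filter, mem_univ, true_and]
          intro l hl; simp [b, hl]
        have hb2 : Function.update b j (!(b j)) ∈ π.support := by
          rw [hsupp]; simp only [mem_filter, mem_univ, true_and]
          intro l hl
          have hlj : l ≠ j := fun h => hjC (h ▸ hl)
          rw [Function.update_of_ne hlj]; simp [b, hl]
        refine ⟨b, hbS, _, hb2, ?_⟩
        simp
    refine ⟨Cᶜ.card, ?_, by rw [hD]⟩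
    rw [hsupp]
    have hco : ∀ x ∈ (Finset.univ : Finset (Fin n → Bool)),
        ((∀ j ∈ C, x j = p j) ↔ (∀ j ∉ Cᶜ, x j = p j)) := by
      intro x _; simp [Finset.mem_compl]
    rw [Finset.filter_congr hco, card_subcube]
  · rintro ⟨k, hS, hDcard⟩
    obtain ⟨x₀, hx₀⟩ : π.support.Nonempty := Finset.nonempty_iff_ne_empty.2 (fun h => hne (Equiv.Perm.support_eq_empty_iff.1 h))
    set D := Finset.univ.filter fun j => ∃ x ∈ π.support, ∃ y ∈ π.support, x j ≠ y j with hDdef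
    have hsub : π.support ⊆ Finset.univ.filter fun x => ∀ j ∉ D, x j = x₀ j := by
      intro x hx
      simp only [mem_filter, mem_univ, true_and]
      intro j hj
      by_contra h
      apply hj
      rw [hDdef]
      simp only [mem_filter, mem_univ, true_and]
      exact ⟨_, hx, _, hx₀, h⟩
    have hcard : ((Finset.univ : Finset (Fin n → Bool)).filter fun x => ∀ j ∉ D, x j = x₀ j).card = 2 ^ k := by
      rw [card_subcube, hDcard]
    have hSeq : π.support = (Finset.univ : Finset (Fin n → Bool)).filter fun x => ∀ j ∉ D, x j = x₀ j :=
      Finset.eq_of_subset_of_card_le hsub (by rw [hcard, hS])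
    have hiD : i ∈ D := by
      have h1 : Function.update x₀ i (!(x₀ i)) ∈ π.support := by
        have h2 := Equiv.Perm.apply_mem_support.2 hx₀
        rwa [hπ x₀ (Equiv.Perm.mem_support.1 hx₀)] at h2
      simp only [hDdef, mem_filter, mem_univ, true_and]
      refine ⟨x₀, hx₀, _, h1, ?_⟩
      simp
    refine ⟨Dᶜ, x₀, by simp [hiD], ?_⟩
    intro x
    by_cases hx : ∀ j ∈ Dᶜ, x j = x₀ j
    · rw [if_pos hx]
      have hxS : x ∈ π.support := by
        rw [hSeq]; simp only [mem_filter, mem_univ, true_and]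
        intro j hj; exact hx j (Finset.mem_compl.2 hj)
      exact hπ x (Equiv.Perm.mem_support.1 hxS)
    · rw [if_neg hx]
      by_contra h
      have hxS : x ∈ π.support := Equiv.Perm.mem_support.2 h
      rw [hSeq] at hxS
      simp only [mem_filter, mem_univ, true_and] at hxS
      exact hx fun j hj => hxS j (Finset.mem_compl.1 hj)
end
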